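/- Let q ∈ (1/2, 1) and p ∈ Δ_2 with p_1 > p_2. Writing p(n) = G^n(p), we have p_1(n+1) − p_2(n+1) = (p_1(n) − p_2(n))(1 + (2q−1)p_3(n)) for every n; consequently the sequence (p_1(n) − p_2(n))_{n≥1} is strictly increasing and the sequence (p_3(n))_{n≥1} converges to zero. -/

import Mathlib

open Filter Topology

/-! `G` preserves the simplex, since the coordinates of `G x` sum to `(x₁ + x₂ + x₃)²`, and on the
simplex `G₁ - G₂ = (x₁ - x₂)(x₁ + x₂ + 2q x₃) = (x₁ - x₂)(1 + (2q - 1) x₃)`. So `d = p₁ - p₂` is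
multiplied by a factor `> 1` at each step; being bounded by `1` it converges to some `L > 0`, and
`(2q - 1) p₃(n) = (d(n+1) - d(n)) / d(n) → 0 / L = 0`. -/

/-- The map G = (G₁,G₂,G₃) on ℝ³ (with parameter q):
G₁(x) = x₁² + 2q x₁ x₃, G₂(x) = x₂² + 2q x₂ x₃,
G₃(x) = x₃² + 2 x₁ x₂ + 2(1−q) x₁ x₃ + 2(1−q) x₂ x₃. -/
noncomputable def Gmap (q : ℝ) (x : ℝ × ℝ × ℝ) : ℝ × ℝ × ℝ :=
  (x.1 ^ 2 + 2 * q * x.1 * x.2.2,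
   x.2.1 ^ 2 + 2 * q * x.2.1 * x.2.2,
   x.2.2 ^ 2 + 2 * x.1 * x.2.1 + 2 * (1 - q) * x.1 * x.2.2
     + 2 * (1 - q) * x.2.1 * x.2.2)

/-- The open simplex Δ₂ ⊆ ℝ³. -/
def simplex2 : Set (ℝ × ℝ × ℝ) :=
  {p | p.1 + p.2.1 + p.2.2 = 1 ∧ 0 < p.1 ∧ 0 < p.2.1 ∧ 0 < p.2.2}

section Sequences

variable {d e : ℕ → ℝ} {c : ℝ}

theorem strictMono_of_succ_eq_mul_one_add (hc : 0 < c) (he : ∀ n, 0 < e n) (hd0 : 0 < d 0)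
    (hrec : ∀ n, d (n + 1) = d n * (1 + c * e n)) : StrictMono d := by
  have hfactor : ∀ n, 1 < 1 + c * e n := fun n => lt_add_of_pos_right 1 (mul_pos hc (he n))
  have hpos : ∀ n, 0 < d n := by
    intro n
    induction n with
    | zero => exact hd0
    | succ n ih => rw [hrec]; exact mul_pos ih (one_pos.trans (hfactor n))
  refine strictMono_nat_of_lt_succ fun n => ?_
  rw [hrec]
  exact lt_mul_of_one_lt_right (hpos n) (hfactor n)

theorem tendsto_zero_of_succ_eq_mul_one_add (hc : c ≠ 0) (hd : Monotone d) (hd0 : 0 < d 0)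
    (hbdd : BddAbove (Set.range d)) (hrec : ∀ n, d (n + 1) = d n * (1 + c * e n)) :
    Tendsto e atTop (𝓝 0) := by
  have hlim : Tendsto d atTop (𝓝 (⨆ n, d n)) := tendsto_atTop_ciSup hd hbdd
  have hL : 0 < ⨆ n, d n := hd0.trans_le (le_ciSup hbdd 0)
  have hquot : Tendsto (fun n => (d (n + 1) - d n) / (c * d n)) atTop (𝓝 0) := by
    simpa [Pi.div_def] using ((hlim.comp (tendsto_add_atTop_nat 1)).sub hlim).div
      (hlim.const_mul c) (mul_ne_zero hc hL.ne')
  refine hquot.congr fun n => ?_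
  have hdn : d n ≠ 0 := (hd0.trans_le (hd (Nat.zero_le n))).ne'
  rw [hrec]
  field_simp
  ring

end Sequences

section Simplex

variable {q : ℝ} {x : ℝ × ℝ × ℝ}

theorem Gmap_sum (q : ℝ) (x : ℝ × ℝ × ℝ) :
    (Gmap q x).1 + (Gmap q x).2.1 + (Gmap q x).2.2 = (x.1 + x.2.1 + x.2.2) ^ 2 := by
  simp only [Gmap]
  ring

theorem mapsTo_Gmap_simplex2 (hq0 : 0 ≤ q) (hq1 : q ≤ 1) :
    Set.MapsTo (Gmap q) simplex2 simplex2 := by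
  rintro x ⟨hs, h1, h2, h3⟩
  have hq1_sub : 0 ≤ 1 - q := sub_nonneg.2 hq1
  refine ⟨by rw [Gmap_sum, hs, one_pow], ?_, ?_, ?_⟩ <;> simp only [Gmap]
  · nlinarith [mul_nonneg (mul_nonneg hq0 h1.le) h3.le]
  · nlinarith [mul_nonneg (mul_nonneg hq0 h2.le) h3.le]
  · nlinarith [mul_pos h1 h2, mul_nonneg (mul_nonneg hq1_sub h1.le) h3.le,
      mul_nonneg (mul_nonneg hq1_sub h2.le) h3.le]

theorem Gmap_fst_sub_snd (q : ℝ) (hx : x.1 + x.2.1 + x.2.2 = 1) :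
    (Gmap q x).1 - (Gmap q x).2.1 = (x.1 - x.2.1) * (1 + (2 * q - 1) * x.2.2) := by
  simp only [Gmap]
  linear_combination (x.1 - x.2.1) * hx

theorem fst_sub_snd_le_one (hx : x ∈ simplex2) : x.1 - x.2.1 ≤ 1 := by
  obtain ⟨hs, -, h2, h3⟩ := hx
  linarith

end Simplex

/-- For q > 1/2 and p ∈ Δ₂ with p₁ > p₂, writing p(n) = G^n(p):
p₁(n+1) − p₂(n+1) = (p₁(n) − p₂(n)) (1 + (2q−1) p₃(n)) for every n;
consequently p₁(n) − p₂(n) is strictly increasing and p₃(n) → 0. -/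
theorem difference_recursion_and_consequences (q : ℝ) (hq1 : 1 / 2 < q)
    (hq2 : q < 1) (p : ℝ × ℝ × ℝ) (hp : p ∈ simplex2) (h12 : p.2.1 < p.1) :
    (∀ n : ℕ, ((Gmap q)^[n + 1] p).1 - ((Gmap q)^[n + 1] p).2.1
      = (((Gmap q)^[n] p).1 - ((Gmap q)^[n] p).2.1)
        * (1 + (2 * q - 1) * ((Gmap q)^[n] p).2.2)) ∧
    StrictMono (fun n => ((Gmap q)^[n] p).1 - ((Gmap q)^[n] p).2.1) ∧
    Tendsto (fun n => ((Gmap q)^[n] p).2.2) atTop (𝓝 0) := by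
  have horbit : ∀ n, (Gmap q)^[n] p ∈ simplex2 := fun n =>
    (mapsTo_Gmap_simplex2 (by linarith) hq2.le).iterate n hp
  have hrec : ∀ n : ℕ, ((Gmap q)^[n + 1] p).1 - ((Gmap q)^[n + 1] p).2.1
      = (((Gmap q)^[n] p).1 - ((Gmap q)^[n] p).2.1)
        * (1 + (2 * q - 1) * ((Gmap q)^[n] p).2.2) := fun n => by
    rw [Function.iterate_succ_apply']
    exact Gmap_fst_sub_snd q (horbit n).1
  have hmono : StrictMono (fun n => ((Gmap q)^[n] p).1 - ((Gmap q)^[n] p).2.1) :=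
    strictMono_of_succ_eq_mul_one_add (by linarith) (fun n => (horbit n).2.2.2)
      (sub_pos.2 h12) hrec
  refine ⟨hrec, hmono, tendsto_zero_of_succ_eq_mul_one_add (by linarith) hmono.monotone
    (sub_pos.2 h12) ⟨1, Set.forall_mem_range.2 fun n => fst_sub_snd_le_one (horbit n)⟩ hrec⟩
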